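/- arXiv:1405.2128 — 2 statements merged into one kernel-verified Lean document; each statement's English description precedes it below -/
import Mathlib

section
/- Let E : X × Y × Z → ℝ be continuous and bounded below on closed sets X, Y, Z in Euclidean spaces, and let (x_k, y_k, z_k) be generated by three-block alternating minimization. If a subsequence (x_{k_i}, y_{k_i}, z_{k_i}) converges to (x*, y*, z*), then E(x*, y*, z*) ≤ E(x, y*, z*) for all x ∈ X. -/
open Filter Topology

theorem isMinOn_of_tendsto_of_eventually_isMinOn {α β γ ι : Type*} [TopologicalSpace α]
    [TopologicalSpace β] [TopologicalSpace γ] [Preorder γ] [OrderClosedTopology γ]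
    {f : α × β → γ} (hf : Continuous f) {s : Set α} {l : Filter ι} [l.NeBot]
    {u : ι → α} {v : ι → β} {a : α} {b : β}
    (hlim : Tendsto (fun i => (u i, v i)) l (𝓝 (a, b)))
    (hmin : ∀ᶠ i in l, IsMinOn (fun a' => f (a', v i)) s (u i)) :
    IsMinOn (fun a' => f (a', b)) s a := by
  intro c hc
  have hv : Tendsto v l (𝓝 b) := (continuous_snd.tendsto (a, b)).comp hlim
  have hfc : Tendsto (fun i => f (c, v i)) l (𝓝 (f (c, b))) :=
    (hf.tendsto (c, b)).comp (tendsto_const_nhds.prodMk_nhds hv)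
  exact le_of_tendsto_of_tendsto ((hf.tendsto (a, b)).comp hlim) hfc
    (hmin.mono fun i hi => hi hc)

theorem am_subseq_limit_partial_min_in_x_general
    {m₁ m₂ m₃ : ℕ}
    (X : Set (Fin m₁ → ℝ))
    (E : (Fin m₁ → ℝ) → (Fin m₂ → ℝ) → (Fin m₃ → ℝ) → ℝ)
    (hcont : Continuous fun p : (Fin m₁ → ℝ) × (Fin m₂ → ℝ) × (Fin m₃ → ℝ) =>
      E p.1 p.2.1 p.2.2)
    (x : ℕ → (Fin m₁ → ℝ)) (y : ℕ → (Fin m₂ → ℝ)) (z : ℕ → (Fin m₃ → ℝ))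
    (hxmin : ∀ k, ∀ x' ∈ X, E (x k) (y k) (z k) ≤ E x' (y k) (z k))
    (φ : ℕ → ℕ)
    (xs : Fin m₁ → ℝ) (ys : Fin m₂ → ℝ) (zs : Fin m₃ → ℝ)
    (hlim : Tendsto (fun i => (x (φ i), y (φ i), z (φ i))) atTop (nhds (xs, ys, zs))) :
    ∀ x' ∈ X, E xs ys zs ≤ E x' ys zs :=
  isMinOn_of_tendsto_of_eventually_isMinOn hcont hlim
    (Eventually.of_forall fun i x' hx' => hxmin (φ i) x' hx')

theorem am_subseq_limit_partial_min_in_x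
    {m₁ m₂ m₃ : ℕ}
    (X : Set (Fin m₁ → ℝ)) (Y : Set (Fin m₂ → ℝ)) (Z : Set (Fin m₃ → ℝ))
    (hX : IsClosed X) (hY : IsClosed Y) (hZ : IsClosed Z)
    (E : (Fin m₁ → ℝ) → (Fin m₂ → ℝ) → (Fin m₃ → ℝ) → ℝ)
    (hcont : Continuous fun p : (Fin m₁ → ℝ) × (Fin m₂ → ℝ) × (Fin m₃ → ℝ) =>
      E p.1 p.2.1 p.2.2)
    (hbdd : ∃ B : ℝ, ∀ x ∈ X, ∀ y ∈ Y, ∀ z ∈ Z, B ≤ E x y z)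
    (x : ℕ → (Fin m₁ → ℝ)) (y : ℕ → (Fin m₂ → ℝ)) (z : ℕ → (Fin m₃ → ℝ))
    (hxX : ∀ k, x k ∈ X) (hyY : ∀ k, y k ∈ Y) (hzZ : ∀ k, z k ∈ Z)
    (hxmin : ∀ k, ∀ x' ∈ X, E (x k) (y k) (z k) ≤ E x' (y k) (z k))
    (hzmin : ∀ k, ∀ z' ∈ Z, E (x k) (y k) (z (k + 1)) ≤ E (x k) (y k) z')
    (hymin : ∀ k, ∀ y' ∈ Y, E (x k) (y (k + 1)) (z (k + 1)) ≤ E (x k) y' (z (k + 1)))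
    (φ : ℕ → ℕ) (hφ : StrictMono φ)
    (xs : Fin m₁ → ℝ) (ys : Fin m₂ → ℝ) (zs : Fin m₃ → ℝ)
    (hlim : Tendsto (fun i => (x (φ i), y (φ i), z (φ i))) atTop (nhds (xs, ys, zs))) :
    ∀ x' ∈ X, E xs ys zs ≤ E x' ys zs :=
  am_subseq_limit_partial_min_in_x_general X E hcont x y z hxmin φ xs ys zs hlim
end

section
/- Fix c₁,…,c_K ∈ ℝ and a measurable partition of unity u₁,…,u_K on Ω with each uᵢ ≥ 0 and Σᵢuᵢ = 1. The functional F(g) = μΦ(f, Ag) + λ Σᵢ ∫_Ω (g − cᵢ)² uᵢ dx on L²(Ω), where μ, λ > 0, A : L²(Ω) → L²(Ω) is a bounded linear operator and Φ(f, ·) is convex and continuous, is coercive on L²(Ω): F(g) → ∞ as ‖g‖₂ → ∞. -/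
/-!
Since `(a - c)² ≥ a²/2 - c²` and the weights `uᵢ` lie in `[0, 1]` and sum to one, the fidelity
term satisfies `∑ᵢ (g - cᵢ)² uᵢ ≥ g²/2 - ∑ᵢ cᵢ²` pointwise. On a set of finite measure this
integrates to `∑ᵢ ∫ (g - cᵢ)² uᵢ ≥ ‖g‖₂²/2 - |Ω| ∑ᵢ cᵢ²`, and the term `μ Φ(A g)` is nonnegative,
so `F` grows at least quadratically in `‖g‖₂`.
-/

open MeasureTheory Filter Finset

lemma half_sq_sub_sq_le_sq_sub (a c : ℝ) : a ^ 2 / 2 - c ^ 2 ≤ (a - c) ^ 2 := by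
  nlinarith [sq_nonneg (a - 2 * c)]

lemma half_sq_sub_sum_sq_le_sum_sq_sub_mul {ι : Type*} [Fintype ι] {w : ι → ℝ}
    (hw0 : ∀ i, 0 ≤ w i) (hw1 : ∑ i, w i = 1) (a : ℝ) (c : ι → ℝ) :
    a ^ 2 / 2 - ∑ i, c i ^ 2 ≤ ∑ i, (a - c i) ^ 2 * w i := by
  have hw_le_one : ∀ i, w i ≤ 1 := fun i =>
    hw1 ▸ single_le_sum (fun j _ => hw0 j) (mem_univ i)
  calc a ^ 2 / 2 - ∑ i, c i ^ 2 ≤ ∑ i, (a ^ 2 / 2 - c i ^ 2) * w i := by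
        simp only [sub_mul, sum_sub_distrib, ← mul_sum, hw1, mul_one]
        gcongr with i
        exact mul_le_of_le_one_right (sq_nonneg _) (hw_le_one i)
    _ ≤ ∑ i, (a - c i) ^ 2 * w i := by
        gcongr with i
        · exact hw0 i
        · exact half_sq_sub_sq_le_sq_sub a (c i)

namespace MeasureTheory.L2

variable {α : Type*} [MeasurableSpace α] {μ : Measure α}

lemma integral_sq_eq_norm_sq (g : Lp ℝ 2 μ) : ∫ x, g x ^ 2 ∂μ = ‖g‖ ^ 2 := by
  rw [← real_inner_self_eq_norm_sq, inner_def]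
  simp only [RCLike.inner_apply, conj_trivial, sq]

lemma half_norm_sq_sub_le_sum_integral_sq_sub_mul [IsFiniteMeasure μ] {ι : Type*} [Fintype ι]
    (g : Lp ℝ 2 μ) (c : ι → ℝ) {u : ι → α → ℝ} (hum : ∀ i, AEStronglyMeasurable (u i) μ)
    (hu0 : ∀ i, ∀ᵐ x ∂μ, 0 ≤ u i x) (husum : ∀ᵐ x ∂μ, ∑ i, u i x = 1) :
    ‖g‖ ^ 2 / 2 - (∑ i, c i ^ 2) * μ.real Set.univ ≤ ∑ i, ∫ x, (g x - c i) ^ 2 * u i x ∂μ := by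
  have hu0' : ∀ᵐ x ∂μ, ∀ i, 0 ≤ u i x := ae_all_iff.2 hu0
  have hu_le_one : ∀ i, ∀ᵐ x ∂μ, ‖u i x‖ ≤ 1 := fun i => by
    filter_upwards [hu0', husum] with x hx0 hx1
    rw [Real.norm_of_nonneg (hx0 i), ← hx1]
    exact single_le_sum (fun j _ => hx0 j) (mem_univ i)
  have hsq : Integrable (fun x => g x ^ 2) μ := (Lp.memLp g).integrable_sq
  have hterm : ∀ i, Integrable (fun x => (g x - c i) ^ 2 * u i x) μ := fun i =>
    ((Lp.memLp g).sub (memLp_const (c i))).integrable_sq.mul_bdd (hum i) (hu_le_one i)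
  calc ‖g‖ ^ 2 / 2 - (∑ i, c i ^ 2) * μ.real Set.univ
      = ∫ x, (g x ^ 2 / 2 - ∑ i, c i ^ 2) ∂μ := by
        rw [integral_sub (hsq.div_const 2) (integrable_const _), integral_div,
          integral_sq_eq_norm_sq, integral_const, smul_eq_mul, mul_comm]
    _ ≤ ∫ x, ∑ i, (g x - c i) ^ 2 * u i x ∂μ := by
        refine integral_mono_ae ((hsq.div_const 2).sub (integrable_const _))
          (integrable_finsetSum _ fun i _ => hterm i) ?_
        filter_upwards [hu0', husum] with x hx0 hx1
        exact half_sq_sub_sum_sq_le_sum_sq_sub_mul hx0 hx1 (g x) c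
    _ = ∑ i, ∫ x, (g x - c i) ^ 2 * u i x ∂μ := integral_finsetSum _ fun i _ => hterm i

end MeasureTheory.L2

lemma tendsto_comap_norm_atTop_of_mul_sq_norm_add_le {E : Type*} [SeminormedAddCommGroup E]
    {F : E → ℝ} {a b : ℝ} (ha : 0 < a) (hF : ∀ g, a * ‖g‖ ^ 2 + b ≤ F g) :
    Tendsto F (comap norm atTop) atTop :=
  tendsto_atTop_mono hF <| (tendsto_atTop_add_const_right _ b
    ((tendsto_pow_atTop two_ne_zero).const_mul_atTop ha)).comp tendsto_comap

theorem segmentation_functional_coercive_general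
    (Ω : Set (EuclideanSpace ℝ (Fin 2))) (hΩb : Bornology.IsBounded Ω)
    (K : ℕ) (c : Fin K → ℝ)
    (u : Fin K → EuclideanSpace ℝ (Fin 2) → ℝ)
    (hum : ∀ i, Measurable (u i))
    (hu0 : ∀ i x, 0 ≤ u i x)
    (husum : ∀ᵐ x ∂(volume.restrict Ω), ∑ i, u i x = 1)
    (μ lam : ℝ) (hμ : 0 < μ) (hlam : 0 < lam)
    (A : Lp ℝ 2 (volume.restrict Ω) →L[ℝ] Lp ℝ 2 (volume.restrict Ω))
    (Φ : Lp ℝ 2 (volume.restrict Ω) → ℝ)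
    (hΦ0 : ∀ h, 0 ≤ Φ h)
    (F : Lp ℝ 2 (volume.restrict Ω) → ℝ)
    (hF : ∀ g : Lp ℝ 2 (volume.restrict Ω),
      F g = μ * Φ (A g) +
        lam * ∑ i, ∫ x, (g x - c i) ^ 2 * u i x ∂(volume.restrict Ω)) :
    Tendsto F (comap norm atTop) atTop := by
  have : IsFiniteMeasure (volume.restrict Ω) :=
    isFiniteMeasure_restrict.2 hΩb.measure_lt_top.ne
  refine tendsto_comap_norm_atTop_of_mul_sq_norm_add_le (half_pos hlam)
    (b := -(lam * ((∑ i, c i ^ 2) * (volume.restrict Ω).real Set.univ))) fun g => ?_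
  have hfidelity := L2.half_norm_sq_sub_le_sum_integral_sq_sub_mul g c
    (fun i => (hum i).aestronglyMeasurable) (fun i => ae_of_all _ (hu0 i)) husum
  rw [hF g]
  linarith [mul_nonneg hμ.le (hΦ0 (A g)), mul_le_mul_of_nonneg_left hfidelity hlam.le]

theorem segmentation_functional_coercive
    (Ω : Set (EuclideanSpace ℝ (Fin 2))) (hΩo : IsOpen Ω) (hΩb : Bornology.IsBounded Ω)
    (K : ℕ) (hK : 0 < K) (c : Fin K → ℝ)
    (u : Fin K → EuclideanSpace ℝ (Fin 2) → ℝ)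
    (hum : ∀ i, Measurable (u i))
    (hu0 : ∀ i x, 0 ≤ u i x)
    (husum : ∀ᵐ x ∂(volume.restrict Ω), ∑ i, u i x = 1)
    (μ lam : ℝ) (hμ : 0 < μ) (hlam : 0 < lam)
    (A : Lp ℝ 2 (volume.restrict Ω) →L[ℝ] Lp ℝ 2 (volume.restrict Ω))
    (f : Lp ℝ 2 (volume.restrict Ω))
    (Φ : Lp ℝ 2 (volume.restrict Ω) → ℝ)
    (hΦconv : ConvexOn ℝ Set.univ Φ) (hΦcont : Continuous Φ)
    (hΦ0 : ∀ h, 0 ≤ Φ h)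
    (F : Lp ℝ 2 (volume.restrict Ω) → ℝ)
    (hF : ∀ g : Lp ℝ 2 (volume.restrict Ω),
      F g = μ * Φ (A g) +
        lam * ∑ i, ∫ x, (g x - c i) ^ 2 * u i x ∂(volume.restrict Ω)) :
    Tendsto F (comap norm atTop) atTop :=
  segmentation_functional_coercive_general Ω hΩb K c u hum hu0 husum μ lam hμ hlam A Φ hΦ0 F hF
end
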